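/- Let I and B be finite nonempty index types, let (p_i)_{i ∈ I} be a probability distribution on I, and let (σ_i)_{i ∈ I} be density matrices on ℂ^B. Then the von Neumann entropy of the classical-quantum state ρ = ∑_{i ∈ I} p_i |i⟩⟨i| ⊗ σ_i on ℂ^I ⊗ ℂ^B satisfies H(ρ) = H({p_i}) + ∑_{i ∈ I} p_i H(σ_i), where H({p_i}) = −∑_i p_i log₂ p_i is the Shannon entropy of the distribution. -/

import Mathlib

open Matrix Kronecker BigOperators Finset ComplexOrder

noncomputable section

/-- A density matrix: a positive semidefinite matrix with unit trace. -/
def IsDensityMatrix {I : Type*} [Fintype I] (ρ : Matrix I I ℂ) : Prop :=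
  ρ.PosSemidef ∧ ρ.trace = 1

/-- von Neumann entropy in base 2, defined via the eigenvalues of a Hermitian matrix
(with the convention `0 * logb 2 0 = 0`, automatic since `Real.logb 2 0 = 0`). -/
def vnEntropy {I : Type*} [Fintype I] [DecidableEq I] (ρ : Matrix I I ℂ) : ℝ :=
  if h : ρ.IsHermitian then -∑ i, h.eigenvalues i * Real.logb 2 (h.eigenvalues i) else 0

/-- Partial trace over the first tensor factor. -/
def ptraceA {A B : Type*} [Fintype A] (ρ : Matrix (A × B) (A × B) ℂ) : Matrix B B ℂ :=
  Matrix.of fun b b' => ∑ a, ρ (a, b) (a, b')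

/-- Partial trace over the second tensor factor. -/
def ptraceB {A B : Type*} [Fintype B] (ρ : Matrix (A × B) (A × B) ℂ) : Matrix A A ℂ :=
  Matrix.of fun a a' => ∑ b, ρ (a, b) (a', b)

/-- Conditional von Neumann entropy `H(A|B)_ρ = H(ρ) − H(Tr_A ρ)`. -/
def condEnt {A B : Type*} [Fintype A] [Fintype B] [DecidableEq A] [DecidableEq B]
    (ρ : Matrix (A × B) (A × B) ℂ) : ℝ :=
  vnEntropy ρ - vnEntropy (ptraceA ρ)

/-- A POVM: a family of positive semidefinite matrices summing to the identity. -/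
def IsPOVM {B T : Type*} [Fintype B] [Fintype T] [DecidableEq B]
    (E : T → Matrix B B ℂ) : Prop :=
  (∀ t, (E t).PosSemidef) ∧ ∑ t, E t = 1

/-- The binary entropy function, base 2. -/
def binH (x : ℝ) : ℝ := -(x * Real.logb 2 x) - (1 - x) * Real.logb 2 (1 - x)

/-- The rank-one projection `|s⟩⟨s|` onto a standard basis vector. -/
def proj {I : Type*} [DecidableEq I] (s : I) : Matrix I I ℂ := Matrix.single s s 1

/-- The rank-one projection `|v⟩⟨v|` onto a vector. -/
def vecProj {I : Type*} (v : I → ℂ) : Matrix I I ℂ :=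
  Matrix.of fun i j => v i * star (v j)

/-- The one-qubit Hadamard matrix `H = (1/√2)[[1,1],[1,−1]]`. -/
def Had : Matrix Bool Bool ℂ :=
  Matrix.of fun a b => (if a && b then -1 else 1) / (Real.sqrt 2 : ℂ)

/-- The n-qubit Hadamard `H^{⊗n}`, acting on bit strings. -/
def HadN (n : ℕ) : Matrix (Fin n → Bool) (Fin n → Bool) ℂ :=
  Matrix.of fun s t => ∏ j, Had (s j) (t j)

/-- The one-qubit unitary mapping the computational basis to the Pauli-Y eigenbasis
`{(|0⟩ + i|1⟩)/√2, (|0⟩ − i|1⟩)/√2}`. -/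
def KY : Matrix Bool Bool ℂ :=
  Matrix.of fun a b =>
    (if a then (if b then -Complex.I else Complex.I) else 1) / (Real.sqrt 2 : ℂ)

/-- `K^{⊗n}` on n qubits. -/
def KYN (n : ℕ) : Matrix (Fin n → Bool) (Fin n → Bool) ℂ :=
  Matrix.of fun s t => ∏ j, KY (s j) (t j)

/-- The measurement projectors on Alice's n qubits: `Π^Z_s = |s⟩⟨s|` (θ = false),
`Π^X_s = H^{⊗n}|s⟩⟨s|H^{⊗n}` (θ = true). -/
def PiZX (n : ℕ) (θ : Bool) (s : Fin n → Bool) :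
    Matrix (Fin n → Bool) (Fin n → Bool) ℂ :=
  if θ then HadN n * proj s * HadN n else proj s

/-- The state obtained by measuring the A register with projectors `P s` (identity on B). -/
def measureA {S A B : Type*} [Fintype S] [Fintype A] [Fintype B] [DecidableEq B]
    (P : S → Matrix A A ℂ) (ρ : Matrix (A × B) (A × B) ℂ) : Matrix (A × B) (A × B) ℂ :=
  ∑ s, (P s ⊗ₖ (1 : Matrix B B ℂ)) * ρ * (P s ⊗ₖ (1 : Matrix B B ℂ))

end

/-! Up to swapping the tensor factors, `ρ` is block diagonal with blocks `pᵢ σᵢ`, so its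
eigenvalues are the products `pᵢ λᵢⱼ` of the weights with the eigenvalues of the `σᵢ`. The
entropy then splits because `logb (pλ) = logb p + logb λ` and `∑ⱼ λᵢⱼ = tr σᵢ = 1`. -/

open Polynomial

namespace Matrix

theorem charpoly_blockDiagonal {o n R : Type*} [Fintype o] [DecidableEq o] [Fintype n]
    [DecidableEq n] [CommRing R] (M : o → Matrix n n R) :
    (blockDiagonal M).charpoly = ∏ k, (M k).charpoly := by
  have : charmatrix (blockDiagonal M) = blockDiagonal fun k => charmatrix (M k) := by
    ext ⟨i, k⟩ ⟨j, k'⟩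
    by_cases hk : k = k'
    · subst hk; by_cases hij : i = j <;> simp [blockDiagonal_apply, hij]
    · simp [blockDiagonal_apply, hk]
  rw [charpoly, this, det_blockDiagonal]; rfl

theorem sum_single_kronecker_eq_reindex_blockDiagonal {o n α : Type*} [Fintype o]
    [DecidableEq o] [Semiring α] (M : o → Matrix n n α) :
    ∑ k, single k k (1 : α) ⊗ₖ M k =
      reindex (Equiv.prodComm n o) (Equiv.prodComm n o) (blockDiagonal M) := by
  ext ⟨k, i⟩ ⟨k', j⟩
  by_cases hk : k = k'
  · simp [blockDiagonal_apply, single_apply, hk, Matrix.sum_apply]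
  · simp only [Matrix.sum_apply, kroneckerMap_apply, single_apply, reindex_apply,
      submatrix_apply, Equiv.prodComm_symm, Equiv.prodComm_apply, Prod.swap_prod_mk,
      blockDiagonal_apply_ne _ _ _ hk]
    exact Finset.sum_eq_zero fun c _ => by grind

namespace IsHermitian

variable {𝕜 n : Type*} [RCLike 𝕜] [Fintype n] [DecidableEq n] {A : Matrix n n 𝕜}

theorem charpoly_smul (hA : A.IsHermitian) (c : 𝕜) :
    (c • A).charpoly = ∏ i, (X - C (c * hA.eigenvalues i)) := by
  conv_lhs => rw [hA.spectral_theorem, ← map_smul, Unitary.conjStarAlgAut_apply,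
    charpoly_mul_comm, ← mul_assoc]
  simp [charpoly_diagonal, ← diagonal_smul]

theorem sum_comp_eigenvalues_of_charpoly {m : Type*} [Fintype m] (hA : A.IsHermitian)
    {d : m → ℝ} (hd : A.charpoly = ∏ j, (X - C (d j : 𝕜))) (f : ℝ → ℝ) :
    ∑ i, f (hA.eigenvalues i) = ∑ j, f (d j) := by
  have hroots : univ.val.map ((↑) ∘ hA.eigenvalues : n → 𝕜) =
      univ.val.map ((↑) ∘ d : m → 𝕜) := by
    rw [← hA.roots_charpoly_eq_eigenvalues, hd,
      roots_prod _ _ (prod_ne_zero_iff.mpr fun j _ => X_sub_C_ne_zero _)]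
    simp
  have hreal : univ.val.map hA.eigenvalues = univ.val.map d := by
    simpa [Multiset.map_map, Function.comp_def] using congrArg (Multiset.map RCLike.re) hroots
  simpa only [Finset.sum_eq_multiset_sum, Multiset.map_map, Function.comp_def] using
    congrArg (fun s => (s.map f).sum) hreal

end IsHermitian
end Matrix

theorem Matrix.IsHermitian.vnEntropy_eq {I : Type*} [Fintype I] [DecidableEq I]
    {A : Matrix I I ℂ} (hA : A.IsHermitian) :
    vnEntropy A = -∑ i, hA.eigenvalues i * Real.logb 2 (hA.eigenvalues i) :=
  dif_pos hA

theorem vnEntropy_eq_of_charpoly {I m : Type*} [Fintype I] [DecidableEq I] [Fintype m]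
    {A : Matrix I I ℂ} (hA : A.IsHermitian) {d : m → ℝ}
    (hd : A.charpoly = ∏ j, (X - C (d j : ℂ))) :
    vnEntropy A = -∑ j, d j * Real.logb 2 (d j) := by
  rw [hA.vnEntropy_eq, hA.sum_comp_eigenvalues_of_charpoly hd fun t => t * Real.logb 2 t]

theorem IsDensityMatrix.sum_eigenvalues {I : Type*} [Fintype I] [DecidableEq I]
    {ρ : Matrix I I ℂ} (hρ : IsDensityMatrix ρ) :
    ∑ i, hρ.1.isHermitian.eigenvalues i = 1 := by
  have htr := hρ.2
  rw [hρ.1.isHermitian.trace_eq_sum_eigenvalues] at htr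
  simpa using congrArg Complex.re htr

theorem Real.mul_mul_logb_mul (b x y : ℝ) :
    x * y * logb b (x * y) = y * (x * logb b x) + x * (y * logb b y) := by
  rcases eq_or_ne x 0 with rfl | hx
  · simp
  rcases eq_or_ne y 0 with rfl | hy
  · simp
  rw [Real.logb_mul hx hy]; ring

theorem vnEntropy_cq_state_general
    {I B : Type*} [Fintype I] [Fintype B]
    [DecidableEq I] [DecidableEq B]
    (p : I → ℝ)
    (σ : I → Matrix B B ℂ) (hσ : ∀ i, IsDensityMatrix (σ i))
    (ρ : Matrix (I × B) (I × B) ℂ)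
    (hρ : ρ = ∑ i, (p i : ℂ) • (Matrix.single i i (1 : ℂ) ⊗ₖ σ i)) :
    vnEntropy ρ = (-∑ i, p i * Real.logb 2 (p i)) + ∑ i, p i * vnEntropy (σ i) := by
  have hσH i : (σ i).IsHermitian := (hσ i).1.isHermitian
  have hblock : ρ = reindex (Equiv.prodComm B I) (Equiv.prodComm B I)
      (blockDiagonal fun i => (p i : ℂ) • σ i) := by
    simp only [hρ, ← kronecker_smul, sum_single_kronecker_eq_reindex_blockDiagonal]
  have hρH : ρ.IsHermitian := hblock ▸ (isHermitian_blockDiagonal_iff.2 fun i =>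
    (hσH i).smul (Complex.conj_ofReal (p i))).submatrix _
  have hchar : ρ.charpoly =
      ∏ x : I × B, (X - C ((p x.1 * (hσH x.1).eigenvalues x.2 : ℝ) : ℂ)) := by
    simp only [hblock, charpoly_reindex, charpoly_blockDiagonal, (hσH _).charpoly_smul,
      Fintype.prod_prod_type, Complex.ofReal_mul]
    rfl -- the two sides use the coercions `RCLike.ofReal` and `Complex.ofReal` respectively
  rw [vnEntropy_eq_of_charpoly hρH hchar, Fintype.sum_prod_type]
  simp only [Real.mul_mul_logb_mul, sum_add_distrib, ← sum_mul, ← mul_sum,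
    (hσ _).sum_eigenvalues, (hσH _).vnEntropy_eq]
  simp only [one_mul, mul_neg, sum_neg_distrib, neg_add]

/-- Entropy of a classical-quantum state:
`H(∑ᵢ pᵢ |i⟩⟨i| ⊗ σᵢ) = H({pᵢ}) + ∑ᵢ pᵢ H(σᵢ)`. -/
theorem vnEntropy_cq_state
    {I B : Type*} [Fintype I] [Fintype B] [Nonempty I] [Nonempty B]
    [DecidableEq I] [DecidableEq B]
    (p : I → ℝ) (hp0 : ∀ i, 0 ≤ p i) (hp1 : ∑ i, p i = 1)
    (σ : I → Matrix B B ℂ) (hσ : ∀ i, IsDensityMatrix (σ i))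
    (ρ : Matrix (I × B) (I × B) ℂ)
    (hρ : ρ = ∑ i, (p i : ℂ) • (Matrix.single i i (1 : ℂ) ⊗ₖ σ i)) :
    vnEntropy ρ = (-∑ i, p i * Real.logb 2 (p i)) + ∑ i, p i * vnEntropy (σ i) :=
  vnEntropy_cq_state_general p σ hσ ρ hρ
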